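/- Let X, X₁, X₂, … be i.i.d. real random variables, let μ* = E[X], and define μ̂_n = (n₀·x₀ + ∑_{i=1}^n X_i)/(n + n₀) for fixed constants x₀ ∈ ℝ and n₀ > 0. If k ∈ ℕ and E[|X|^k] < ∞, then E[(μ̂_n − μ*)^k] = O(n^{−⌈k/2⌉}); that is, there exists a constant C such that for all n ≥ 1, |E[(μ̂_n − μ*)^k]| ≤ C·n^{−⌈k/2⌉}. -/

import Mathlib

open MeasureTheory ProbabilityTheory Finset

/-- The modified maximum likelihood estimator
`μ̂_n = (n₀·x₀ + ∑_{i=1}^n X_i) / (n + n₀)`, built from a fake initial outcome `x₀`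
counted with multiplicity `n₀`. -/
noncomputable def modML {Ω : Type*} (x₀ n₀ : ℝ) (X : ℕ → Ω → ℝ) (n : ℕ) (ω : Ω) : ℝ :=
  (n₀ * x₀ + ∑ i ∈ Finset.range n, X i ω) / (n + n₀)

/-!
Write `Y i = X i - μ*` and `a = n₀ (x₀ - μ*)`, so that `μ̂_n - μ* = (a + S_n) / (n + n₀)` with
`S_n = ∑_{i<n} Y i`. By the binomial theorem it suffices that `E[S_n^j] = O(n^⌊j/2⌋)` for `j ≤ k`.
Expanding `S_n^j` multinomially, the term `E[Y_{g 1} ⋯ Y_{g j}]` factors over the distinct indices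
by independence, so it vanishes as soon as some index occurs exactly once, which happens whenever
`g` takes more than `j/2` values. Each remaining term is at most `E|Y|^j` by AM-GM, and there are
at most `(j/2)^j n^(j/2)` of them. Finally `n^⌊k/2⌋ / (n + n₀)^k ≤ n^(-⌈k/2⌉)`.
-/

lemma Finset.exists_card_fiber_eq_one_of_card_lt {κ ι : Type*} [Fintype κ] [DecidableEq ι]
    (g : κ → ι) (hg : Fintype.card κ < 2 * #(univ.image g)) :
    ∃ b ∈ univ.image g, #{p | g p = b} = 1 := by
  by_contra! h
  have hfiber : ∀ b ∈ univ.image g, 2 ≤ #{p | g p = b} := fun b hb => by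
    obtain ⟨p, -, rfl⟩ := mem_image.mp hb
    have : 0 < #{q | g q = g p} := card_pos.mpr ⟨p, by simp⟩
    have := h _ hb
    omega
  have := card_nsmul_le_sum _ _ _ hfiber
  rw [← card_eq_sum_card_image, card_univ, smul_eq_mul] at this
  omega

lemma mul_abs_prod_le_sum_abs_pow {j : ℕ} (y : Fin j → ℝ) :
    j * |∏ p, y p| ≤ ∑ p, |y p| ^ j := by
  rcases eq_or_ne j 0 with rfl | hj
  · simp
  have amgm := Real.geom_mean_le_arith_mean_weighted univ (fun _ => (j : ℝ)⁻¹)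
    (fun p => |y p| ^ j) (fun _ _ => by positivity) (by simp [hj]) (fun _ _ => by positivity)
  simp only [Real.pow_rpow_inv_natCast (abs_nonneg _) hj, ← abs_prod, ← mul_sum] at amgm
  rwa [le_inv_mul_iff₀ (by positivity)] at amgm

lemma card_piFinset_filter_card_image_le {ι : Type*} [DecidableEq ι] {s : Finset ι}
    (hs : s.Nonempty) (j t : ℕ) :
    #{g ∈ Fintype.piFinset (fun _ : Fin j => s) | #(univ.image g) ≤ t} ≤ t ^ j * #s ^ t := by
  obtain ⟨d, hd⟩ := hs
  calc #{g ∈ Fintype.piFinset (fun _ : Fin j => s) | #(univ.image g) ≤ t}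
      ≤ #(((Fintype.piFinset fun _ : Fin j => (univ : Finset (Fin t))) ×ˢ
          (Fintype.piFinset fun _ : Fin t => s)).image fun c => c.2 ∘ c.1) := by
        refine card_le_card fun g hg => ?_
        simp only [mem_filter, Fintype.mem_piFinset] at hg
        obtain ⟨hgs, hcard⟩ := hg
        set l := (univ.image g).toList
        have hmem : ∀ p, g p ∈ l := fun p => by simp [l]
        have hidx : ∀ p, l.idxOf (g p) < l.length := fun p => List.idxOf_lt_length_iff.mpr (hmem p)
        have hlen : l.length ≤ t := by simpa [l] using hcard
        refine mem_image.mpr ⟨(fun p => ⟨l.idxOf (g p), (hidx p).trans_le hlen⟩,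
          fun i => l.getD i d), ?_, funext fun p => ?_⟩
        · simp only [mem_product, Fintype.mem_piFinset, mem_univ, implies_true, true_and]
          intro i
          by_cases hi : (i : ℕ) < l.length
          · rw [List.getD_eq_getElem l d hi]
            obtain ⟨p, -, hp⟩ := mem_image.mp (mem_toList.mp (List.getElem_mem hi))
            exact hp ▸ hgs p
          · rwa [List.getD_eq_default l d (not_lt.mp hi)]
        · change l.getD (l.idxOf (g p)) d = g p
          rw [List.getD_eq_getElem l d (hidx p), List.getElem_idxOf]
    _ ≤ t ^ j * #s ^ t := by
        refine card_image_le.trans_eq ?_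
        simp [card_product, Fintype.card_piFinset]

section

variable {Ω : Type*} [MeasurableSpace Ω] {μ : Measure Ω}

lemma memLp_of_integrable_abs_pow {f : Ω → ℝ} {k : ℕ} (hk : k ≠ 0)
    (hf : AEStronglyMeasurable f μ) (h : Integrable (fun ω => |f ω| ^ k) μ) : MemLp f k μ := by
  rw [← integrable_norm_rpow_iff hf (by exact_mod_cast hk) (by simp)]
  simpa [Real.rpow_natCast] using h

lemma MeasureTheory.MemLp.integrable_pow_of_le [IsFiniteMeasure μ] {f : Ω → ℝ} {k m : ℕ}
    (hf : MemLp f k μ) (hm : m ≤ k) : Integrable (fun ω => f ω ^ m) μ := by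
  refine (integrable_norm_iff (hf.1.pow m)).mp ?_
  simpa [norm_pow] using (hf.mono_exponent (by exact_mod_cast hm)).integrable_norm_pow'

lemma integrable_prod_of_memLp [IsFiniteMeasure μ] {j : ℕ} {f : Fin j → Ω → ℝ}
    (hf : ∀ p, MemLp (f p) j μ) : Integrable (fun ω => ∏ p, f p ω) μ := by
  refine (MemLp.prod' (s := univ) (p := fun _ => (j : ENNReal)) fun p _ => hf p).integrable ?_
  simp [ENNReal.one_le_inv]

lemma ProbabilityTheory.iIndepFun.integral_prod_comp_eq_prod_image {ι κ : Type*}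
    [Fintype κ] [DecidableEq ι] {Y : ι → Ω → ℝ} (hind : iIndepFun Y μ)
    (hmeas : ∀ i, Measurable (Y i)) (g : κ → ι) :
    ∫ ω, ∏ p, Y (g p) ω ∂μ = ∏ b ∈ univ.image g, ∫ ω, Y b ω ^ #{p | g p = b} ∂μ := by
  set A := univ.image g
  have hindA : iIndepFun (fun (b : A) ω => Y b ω ^ #{p | g p = b}) μ :=
    (hind.precomp (g := ((↑) : A → ι)) Subtype.val_injective).comp
      (fun b x => x ^ #{p | g p = b}) fun _ => measurable_id.pow_const _
  have hprod : ∀ ω, ∏ p, Y (g p) ω = ∏ b : A, Y b ω ^ #{p | g p = b} := fun ω => by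
    rw [prod_comp (s := univ) (fun b => Y b ω) g, ← prod_coe_sort]
  simp_rw [hprod, ← prod_coe_sort A]
  exact hindA.integral_fun_prod_eq_prod_integral fun b =>
    ((hmeas b).pow_const _).aestronglyMeasurable

lemma ProbabilityTheory.iIndepFun.integral_prod_comp_eq_zero {ι κ : Type*}
    [Fintype κ] [DecidableEq ι] {Y : ι → Ω → ℝ} (hind : iIndepFun Y μ)
    (hmeas : ∀ i, Measurable (Y i)) (hcent : ∀ i, ∫ ω, Y i ω ∂μ = 0) (g : κ → ι)
    (hg : Fintype.card κ < 2 * #(univ.image g)) :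
    ∫ ω, ∏ p, Y (g p) ω ∂μ = 0 := by
  obtain ⟨b, hb, hb1⟩ := exists_card_fiber_eq_one_of_card_lt g hg
  rw [hind.integral_prod_comp_eq_prod_image hmeas g]
  exact prod_eq_zero hb (by simpa [hb1] using hcent b)

lemma abs_integral_prod_le_integral_abs_pow [IsFiniteMeasure μ] {ι : Type*} {j : ℕ}
    {Y : ι → Ω → ℝ} {Z : Ω → ℝ} (hident : ∀ i, IdentDistrib (Y i) Z μ μ) (hZ : MemLp Z j μ)
    (g : Fin j → ι) :
    |∫ ω, ∏ p, Y (g p) ω ∂μ| ≤ ∫ ω, |Z ω| ^ j ∂μ := by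
  rcases eq_or_ne j 0 with rfl | hj
  · simp [abs_of_nonneg measureReal_nonneg]
  have habs_pow : ∀ i, IdentDistrib (fun ω => |Y i ω| ^ j) (fun ω => |Z ω| ^ j) μ μ :=
    fun i => (hident i).comp (continuous_abs.measurable.pow_const j)
  have hint : ∀ i, Integrable (fun ω => |Y i ω| ^ j) μ := fun i =>
    (habs_pow i).integrable_iff.mpr (by simpa using hZ.integrable_norm_pow')
  have hpos : (0 : ℝ) < j := by positivity
  refine le_of_mul_le_mul_left ?_ hpos
  calc (j : ℝ) * |∫ ω, ∏ p, Y (g p) ω ∂μ| ≤ ∫ ω, j * |∏ p, Y (g p) ω| ∂μ := by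
        rw [integral_const_mul]; gcongr; exact abs_integral_le_integral_abs
    _ ≤ ∫ ω, ∑ p, |Y (g p) ω| ^ j ∂μ :=
        integral_mono_of_nonneg (ae_of_all _ fun ω => by positivity)
          (integrable_finsetSum _ fun p _ => hint (g p))
          (ae_of_all _ fun ω => mul_abs_prod_le_sum_abs_pow _)
    _ = j * ∫ ω, |Z ω| ^ j ∂μ := by
        rw [integral_finsetSum _ fun p _ => hint (g p)]
        simp [(habs_pow _).integral_eq]

lemma abs_integral_sum_pow_le [IsFiniteMeasure μ] {ι : Type*} [DecidableEq ι]
    {Y : ι → Ω → ℝ} {Z : Ω → ℝ} {j : ℕ} (hind : iIndepFun Y μ) (hmeas : ∀ i, Measurable (Y i))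
    (hident : ∀ i, IdentDistrib (Y i) Z μ μ) (hZ : MemLp Z j μ) (hcent : ∫ ω, Z ω ∂μ = 0)
    {s : Finset ι} (hs : s.Nonempty) :
    |∫ ω, (∑ i ∈ s, Y i ω) ^ j ∂μ| ≤
      ((j / 2 : ℕ) : ℝ) ^ j * (∫ ω, |Z ω| ^ j ∂μ) * (#s : ℝ) ^ (j / 2) := by
  set P := Fintype.piFinset fun _ : Fin j => s
  set I : (Fin j → ι) → ℝ := fun g => ∫ ω, ∏ p, Y (g p) ω ∂μ
  have hexpand : ∀ ω, (∑ i ∈ s, Y i ω) ^ j = ∑ g ∈ P, ∏ p, Y (g p) ω := fun ω => by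
    rw [← Fin.prod_const, prod_univ_sum]
  have hterm : ∀ g : Fin j → ι, Integrable (fun ω => ∏ p, Y (g p) ω) μ := fun g =>
    integrable_prod_of_memLp fun p => (hident (g p)).memLp_iff.mpr hZ
  have hvanish : ∀ g ∈ P, |I g| ≠ 0 → #(univ.image g) ≤ j / 2 := fun g _ hg => by
    by_contra! hlt
    refine hg (abs_eq_zero.mpr (hind.integral_prod_comp_eq_zero hmeas
      (fun i => (hident i).integral_eq.trans hcent) g ?_))
    simp only [Fintype.card_fin]
    omega
  have hcount :
      (#{g ∈ P | #(univ.image g) ≤ j / 2} : ℝ) ≤ ((j / 2 : ℕ) : ℝ) ^ j * #s ^ (j / 2) := by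
    exact_mod_cast card_piFinset_filter_card_image_le hs j (j / 2)
  simp_rw [hexpand]
  rw [integral_finsetSum _ fun g _ => hterm g]
  calc |∑ g ∈ P, I g| ≤ ∑ g ∈ P, |I g| := abs_sum_le_sum_abs _ _
    _ = ∑ g ∈ P with #(univ.image g) ≤ j / 2, |I g| := (sum_filter_of_ne hvanish).symm
    _ ≤ #{g ∈ P | #(univ.image g) ≤ j / 2} * ∫ ω, |Z ω| ^ j ∂μ := by
        rw [← nsmul_eq_mul]
        exact sum_le_card_nsmul _ _ _ fun g _ =>
          abs_integral_prod_le_integral_abs_pow hident hZ g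
    _ ≤ ((j / 2 : ℕ) : ℝ) ^ j * (∫ ω, |Z ω| ^ j ∂μ) * (#s : ℝ) ^ (j / 2) := by
        have hZj : 0 ≤ ∫ ω, |Z ω| ^ j ∂μ := integral_nonneg fun ω => by positivity
        exact (mul_le_mul_of_nonneg_right hcount hZj).trans_eq (by ring)

lemma abs_integral_const_add_pow_le [IsFiniteMeasure μ] {f : Ω → ℝ} {k : ℕ} (hf : MemLp f k μ)
    (a : ℝ) :
    |∫ ω, (a + f ω) ^ k ∂μ| ≤
      ∑ m ∈ range (k + 1), |a| ^ m * |∫ ω, f ω ^ (k - m) ∂μ| * k.choose m := by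
  have hterm : ∀ m, Integrable (fun ω => a ^ m * f ω ^ (k - m) * k.choose m) μ := fun m =>
    ((hf.integrable_pow_of_le (Nat.sub_le k m)).const_mul _).mul_const _
  simp_rw [add_pow]
  rw [integral_finsetSum _ fun m _ => hterm m]
  refine (abs_sum_le_sum_abs _ _).trans_eq (sum_congr rfl fun m _ => ?_)
  rw [integral_mul_const, integral_const_mul, abs_mul, abs_mul, abs_pow, Nat.abs_cast]

lemma exists_abs_integral_const_add_sum_pow_le [IsFiniteMeasure μ] {Y : ℕ → Ω → ℝ}
    {Z : Ω → ℝ} {k : ℕ} (hind : iIndepFun Y μ) (hmeas : ∀ i, Measurable (Y i))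
    (hident : ∀ i, IdentDistrib (Y i) Z μ μ) (hZ : MemLp Z k μ) (hcent : ∫ ω, Z ω ∂μ = 0)
    (a : ℝ) :
    ∃ C, ∀ n : ℕ, n ≠ 0 →
      |∫ ω, (a + ∑ i ∈ range n, Y i ω) ^ k ∂μ| ≤ C * (n : ℝ) ^ (k / 2) := by
  refine ⟨∑ m ∈ range (k + 1), |a| ^ m * (((k - m) / 2 : ℕ) ^ (k - m) *
    ∫ ω, |Z ω| ^ (k - m) ∂μ) * k.choose m, fun n hn => ?_⟩
  have hn1 : (1 : ℝ) ≤ n := by exact_mod_cast Nat.one_le_iff_ne_zero.mpr hn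
  have hsum : MemLp (fun ω => ∑ i ∈ range n, Y i ω) k μ :=
    memLp_finsetSum _ fun i _ => (hident i).memLp_iff.mpr hZ
  refine (abs_integral_const_add_pow_le hsum a).trans ?_
  rw [sum_mul]
  refine sum_le_sum fun m _ => ?_
  have hmoment := abs_integral_sum_pow_le hind hmeas hident
    (hZ.mono_exponent (by exact_mod_cast Nat.sub_le k m)) hcent (nonempty_range_iff.mpr hn)
  rw [card_range] at hmoment
  have hpow : (n : ℝ) ^ ((k - m) / 2) ≤ (n : ℝ) ^ (k / 2) :=
    pow_le_pow_right₀ hn1 (Nat.div_le_div_right (Nat.sub_le k m))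
  have hZm : 0 ≤ ∫ ω, |Z ω| ^ (k - m) ∂μ := integral_nonneg fun ω => by positivity
  calc |a| ^ m * |∫ ω, (∑ i ∈ range n, Y i ω) ^ (k - m) ∂μ| * k.choose m
      ≤ |a| ^ m * (((k - m) / 2 : ℕ) ^ (k - m) * (∫ ω, |Z ω| ^ (k - m) ∂μ) *
          (n : ℝ) ^ (k / 2)) * k.choose m := by
        gcongr
        exact hmoment.trans (by gcongr)
    _ = _ := by ring

end

lemma modML_sub_eq {Ω : Type*} (x₀ n₀ : ℝ) (X : ℕ → Ω → ℝ) {n : ℕ} (hn : (n : ℝ) + n₀ ≠ 0)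
    (c : ℝ) (ω : Ω) :
    modML x₀ n₀ X n ω - c = (n₀ * (x₀ - c) + ∑ i ∈ range n, (X i ω - c)) / (n + n₀) := by
  rw [modML, sum_sub_distrib, sum_const, card_range, nsmul_eq_mul]
  field_simp
  ring

/-- Theorem `devavasym`: for i.i.d. `X, X₁, X₂, …` whose first `k`
moments exist, with mean `μ* = E[X]`, we have `E[(μ̂_n − μ*)^k] = O(n^{−⌈k/2⌉})`.
(Here `⌈k/2⌉ = (k+1)/2` in natural-number division.) -/
theorem modML_pow_dev
    {Ω : Type*} [MeasurableSpace Ω] (μ : Measure Ω) [IsProbabilityMeasure μ]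
    (X : ℕ → Ω → ℝ)
    (hmeas : ∀ i, Measurable (X i))
    (hindep : iIndepFun X μ)
    (hident : ∀ i, IdentDistrib (X i) (X 0) μ μ)
    (μstar : ℝ) (hμstar : μstar = ∫ ω, X 0 ω ∂μ)
    (x₀ n₀ : ℝ) (hn₀ : 0 < n₀)
    (k : ℕ)
    (hmom : Integrable (fun ω => |X 0 ω| ^ k) μ) :
    ∃ C : ℝ, ∀ n : ℕ, 1 ≤ n →
      |∫ ω, (modML x₀ n₀ X n ω - μstar) ^ k ∂μ| ≤ C / (n : ℝ) ^ ((k + 1) / 2) := by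
  rcases eq_or_ne k 0 with rfl | hk
  · exact ⟨1, fun n _ => by simp⟩
  have hX : MemLp (X 0) k μ := memLp_of_integrable_abs_pow hk (hmeas 0).aestronglyMeasurable hmom
  have hshift : Measurable fun x : ℝ => x - μstar := measurable_id.sub_const _
  have hcent : ∫ ω, X 0 ω - μstar ∂μ = 0 := by
    rw [integral_sub (hX.integrable (by exact_mod_cast Nat.one_le_iff_ne_zero.mpr hk))
      (integrable_const _), hμstar]
    simp
  obtain ⟨C, hC⟩ := exists_abs_integral_const_add_sum_pow_le (Y := fun i ω => X i ω - μstar)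
    (hindep.comp _ fun _ => hshift) (fun i => (hmeas i).sub_const _)
    (fun i => (hident i).comp hshift) (hX.sub (memLp_const μstar)) hcent (n₀ * (x₀ - μstar))
  refine ⟨C, fun n hn => ?_⟩
  have hn' : (0 : ℝ) < n := by exact_mod_cast hn
  have hsplit : (n : ℝ) ^ k = (n : ℝ) ^ (k / 2) * (n : ℝ) ^ ((k + 1) / 2) := by
    rw [← pow_add]; congr 1; omega
  simp_rw [modML_sub_eq x₀ n₀ X (n := n) (by positivity) μstar, div_pow]
  rw [integral_div, abs_div, abs_of_pos (a := ((n : ℝ) + n₀) ^ k) (by positivity)]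
  calc |∫ ω, (n₀ * (x₀ - μstar) + ∑ i ∈ range n, (X i ω - μstar)) ^ k ∂μ| / (n + n₀) ^ k
      ≤ |∫ ω, (n₀ * (x₀ - μstar) + ∑ i ∈ range n, (X i ω - μstar)) ^ k ∂μ| / n ^ k := by
        gcongr; linarith
    _ ≤ C * n ^ (k / 2) / n ^ k := by gcongr; exact hC n (by omega)
    _ = C / n ^ ((k + 1) / 2) := by
        rw [hsplit, mul_comm (n ^ (k / 2) : ℝ), mul_div_mul_right _ _ (by positivity)]
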